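/- Let X be a compact Hausdorff space with a distinguished point *, and let A ⊆ X \ {*} be a compact open subset with characteristic function χ_A. Suppose ν : C(A) → ℝ preserves constants, is weakly additive, weakly preserves order, and is (2^s − 1)-Lipschitz for some s ≥ 1. Fix t ∈ [0,1]. Then the functional μ : C(X) → ℝ defined by μ(φ) = φ(*) + max(t·ν(φ|A − φ(*)), 0) + min(t·ν(φ|A − φ(*)), 0) = φ(*) + t·ν(φ|A − φ(*)) is weakly additive and preserves constants, and is (2^{s+1} − 1)-Lipschitz with respect to the sup-norms. -/

import Mathlib

/-!
The normalisation `φ ↦ φ|A − φ(p)` kills constants and is `2`-Lipschitz in the sup-norm, so the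
extension `φ(p) + t · ν(φ|A − φ(p))` of a `K`-Lipschitz `ν` is `(2K + 1)`-Lipschitz for `t ∈ [0, 1]`;
with `K = 2^s − 1` this is `2^(s+1) − 1`.
-/

namespace ContinuousMap

variable {X : Type*} [TopologicalSpace X] (A : Set X) (p : X)

def restrictSubEval (φ : C(X, ℝ)) : C(A, ℝ) :=
  φ.restrict A - const A (φ p)

@[simp]
theorem restrictSubEval_apply (φ : C(X, ℝ)) (a : A) :
    restrictSubEval A p φ a = φ a - φ p :=
  rfl

theorem restrictSubEval_const (c : ℝ) : restrictSubEval A p (const X c) = 0 := by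
  ext; simp

theorem restrictSubEval_add_const (φ : C(X, ℝ)) (c : ℝ) :
    restrictSubEval A p (φ + const X c) = restrictSubEval A p φ := by
  ext; simp

theorem restrictSubEval_sub (φ ψ : C(X, ℝ)) :
    restrictSubEval A p φ - restrictSubEval A p ψ = restrictSubEval A p (φ - ψ) := by
  ext; simp only [sub_apply, restrictSubEval_apply]; ring

theorem norm_restrictSubEval_le [CompactSpace X] [CompactSpace A] (φ : C(X, ℝ)) :
    ‖restrictSubEval A p φ‖ ≤ 2 * ‖φ‖ := by
  refine (norm_le _ (by positivity)).2 fun a => ?_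
  calc ‖φ a - φ p‖ ≤ ‖φ a‖ + ‖φ p‖ := norm_sub_le _ _
    _ ≤ ‖φ‖ + ‖φ‖ := add_le_add (norm_coe_le_norm φ a) (norm_coe_le_norm φ p)
    _ = 2 * ‖φ‖ := by ring

def extendFunctional (t : ℝ) (ν : C(A, ℝ) → ℝ) (φ : C(X, ℝ)) : ℝ :=
  φ p + t * ν (restrictSubEval A p φ)

variable {A p} {t : ℝ} {ν : C(A, ℝ) → ℝ}

theorem extendFunctional_const (hν : ν 0 = 0) (c : ℝ) :
    extendFunctional A p t ν (const X c) = c := by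
  simp [extendFunctional, restrictSubEval_const, hν]

theorem extendFunctional_add_const (φ : C(X, ℝ)) (c : ℝ) :
    extendFunctional A p t ν (φ + const X c) = extendFunctional A p t ν φ + c := by
  simp only [extendFunctional, restrictSubEval_add_const, add_apply, const_apply]
  ring

theorem abs_extendFunctional_sub_le [CompactSpace X] [CompactSpace A] {K : ℝ} (hK : 0 ≤ K)
    (hν : ∀ ψ₁ ψ₂, |ν ψ₁ - ν ψ₂| ≤ K * ‖ψ₁ - ψ₂‖) (ht : t ∈ Set.Icc (0 : ℝ) 1)
    (φ ψ : C(X, ℝ)) :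
    |extendFunctional A p t ν φ - extendFunctional A p t ν ψ| ≤ (2 * K + 1) * ‖φ - ψ‖ := by
  set g₁ := restrictSubEval A p φ
  set g₂ := restrictSubEval A p ψ
  have hpt : |(φ - ψ) p| ≤ ‖φ - ψ‖ := norm_coe_le_norm (φ - ψ) p
  have hg : ‖g₁ - g₂‖ ≤ 2 * ‖φ - ψ‖ := by
    rw [restrictSubEval_sub]; exact norm_restrictSubEval_le A p _
  calc |extendFunctional A p t ν φ - extendFunctional A p t ν ψ|
      = |(φ - ψ) p + t * (ν g₁ - ν g₂)| := by
        simp only [extendFunctional, sub_apply, g₁, g₂]; congr 1; ring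
    _ ≤ |(φ - ψ) p| + |t * (ν g₁ - ν g₂)| := abs_add_le _ _
    _ = |(φ - ψ) p| + t * |ν g₁ - ν g₂| := by rw [abs_mul, abs_of_nonneg ht.1]
    _ ≤ ‖φ - ψ‖ + 1 * (K * (2 * ‖φ - ψ‖)) := by
      gcongr
      · exact ht.2
      · exact (hν g₁ g₂).trans (by gcongr)
    _ = (2 * K + 1) * ‖φ - ψ‖ := by ring

end ContinuousMap

theorem extension_functional_properties_general
    {X : Type*} [TopologicalSpace X] [CompactSpace X]
    (p : X) (A : Set X) [CompactSpace ↥A]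
    (s : ℕ)
    (ν : C(↥A, ℝ) → ℝ)
    (hconst : ∀ c : ℝ, ν (ContinuousMap.const ↥A c) = c)
    (hlip : ∀ ψ₁ ψ₂ : C(↥A, ℝ), |ν ψ₁ - ν ψ₂| ≤ (2 ^ s - 1) * ‖ψ₁ - ψ₂‖)
    (t : ℝ) (ht : t ∈ Set.Icc (0 : ℝ) 1) :
    let μ : C(X, ℝ) → ℝ := fun φ =>
      φ p + t * ν (φ.restrict A - ContinuousMap.const ↥A (φ p))
    (∀ c : ℝ, μ (ContinuousMap.const X c) = c) ∧
    (∀ (φ : C(X, ℝ)) (c : ℝ), μ (φ + ContinuousMap.const X c) = μ φ + c) ∧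
    (∀ φ ψ : C(X, ℝ), |μ φ - μ ψ| ≤ (2 ^ (s + 1) - 1) * ‖φ - ψ‖) := by
  have hν0 : ν 0 = 0 := by simpa using hconst 0
  have hK : (0 : ℝ) ≤ 2 ^ s - 1 := sub_nonneg.2 (one_le_pow₀ one_le_two)
  refine ⟨ContinuousMap.extendFunctional_const hν0, ContinuousMap.extendFunctional_add_const,
    fun φ ψ => (ContinuousMap.abs_extendFunctional_sub_le hK hlip ht φ ψ).trans_eq ?_⟩
  ring

theorem extension_functional_properties
    {X : Type*} [TopologicalSpace X] [CompactSpace X] [T2Space X]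
    (p : X) (A : Set X) (hAopen : IsOpen A) [CompactSpace ↥A]
    (hpA : p ∉ A) (hAne : A.Nonempty)
    (s : ℕ) (hs : 1 ≤ s)
    (ν : C(↥A, ℝ) → ℝ)
    (hconst : ∀ c : ℝ, ν (ContinuousMap.const ↥A c) = c)
    (hwa : ∀ (ψ : C(↥A, ℝ)) (c : ℝ), ν (ψ + ContinuousMap.const ↥A c) = ν ψ + c)
    (hord : ∀ (ψ : C(↥A, ℝ)) (a b : ℝ), (∀ y, a ≤ ψ y) → (∀ y, ψ y ≤ b) →
      a ≤ ν ψ ∧ ν ψ ≤ b)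
    (hlip : ∀ ψ₁ ψ₂ : C(↥A, ℝ), |ν ψ₁ - ν ψ₂| ≤ (2 ^ s - 1) * ‖ψ₁ - ψ₂‖)
    (t : ℝ) (ht : t ∈ Set.Icc (0 : ℝ) 1) :
    let μ : C(X, ℝ) → ℝ := fun φ =>
      φ p + t * ν (φ.restrict A - ContinuousMap.const ↥A (φ p))
    (∀ c : ℝ, μ (ContinuousMap.const X c) = c) ∧
    (∀ (φ : C(X, ℝ)) (c : ℝ), μ (φ + ContinuousMap.const X c) = μ φ + c) ∧
    (∀ φ ψ : C(X, ℝ), |μ φ - μ ψ| ≤ (2 ^ (s + 1) - 1) * ‖φ - ψ‖) :=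
  extension_functional_properties_general p A s ν hconst hlip t ht
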